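/- Let x, y₀, r₀, r₁, r_x, p_Q ∈ ℂ satisfy x ∉ {0,1}, y₀ ∉ {0,1,x}, r₀ − r_x = p_Q·x·(y₀ − 1), r₁ − r_x = p_Q·y₀·(x − 1), and p_Q²·y₀(y₀ − 1)(y₀ − x) = 1. Define β₁ := −(y₀/x)·r₀², β₂ := ((y₀ − 1)/(x − 1))·r₁², β₃ := ((x − y₀)/(x(x − 1)))·r_x². Then β₁ + β₂ + β₃ = −1; consequently the (1,1)-entries A₁₁^{(i)} = −1/4 − βᵢ/2 of the residue matrices satisfy A₁₁^{(1)} + A₁₁^{(2)} + A₁₁^{(3)} = −1/4. -/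

import Mathlib

/-! Substituting `r₀ = r_x + p_Q x (y₀ - 1)` and `r₁ = r_x + p_Q y₀ (x - 1)`, the coefficients of
`r_x²` and `r_x` in `β₁ + β₂ + β₃` vanish, and what remains is `-p_Q² y₀ (y₀ - 1) (y₀ - x) = -1`. -/

theorem sum_beta_eq_neg_one {K : Type*} [Field K] {x y₀ r₀ r₁ rx pQ : K}
    (hx0 : x ≠ 0) (hx1 : x ≠ 1)
    (h1 : r₀ - rx = pQ * x * (y₀ - 1))
    (h2 : r₁ - rx = pQ * y₀ * (x - 1))
    (hpQ : pQ ^ 2 * (y₀ * (y₀ - 1) * (y₀ - x)) = 1) :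
    -(y₀ / x) * r₀ ^ 2 + (y₀ - 1) / (x - 1) * r₁ ^ 2
      + (x - y₀) / (x * (x - 1)) * rx ^ 2 = -1 := by
  have hx1' : x - 1 ≠ 0 := sub_ne_zero.mpr hx1
  rw [eq_add_of_sub_eq h1, eq_add_of_sub_eq h2]
  field_simp
  linear_combination (-(x * (x - 1))) * hpQ

theorem sum_beta_elliptic (x y₀ r₀ r₁ rx pQ : ℂ)
    (hx0 : x ≠ 0) (hx1 : x ≠ 1)
    (h1 : r₀ - rx = pQ * x * (y₀ - 1))
    (h2 : r₁ - rx = pQ * y₀ * (x - 1))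
    (hpQ : pQ ^ 2 * (y₀ * (y₀ - 1) * (y₀ - x)) = 1) :
    (-(y₀ / x) * r₀ ^ 2 + (y₀ - 1) / (x - 1) * r₁ ^ 2
        + (x - y₀) / (x * (x - 1)) * rx ^ 2 = -1) ∧
      ((-1 / 4 - (-(y₀ / x) * r₀ ^ 2) / 2)
          + (-1 / 4 - ((y₀ - 1) / (x - 1) * r₁ ^ 2) / 2)
          + (-1 / 4 - ((x - y₀) / (x * (x - 1)) * rx ^ 2) / 2) = -1 / 4) := by
  have hβ := sum_beta_eq_neg_one hx0 hx1 h1 h2 hpQ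
  exact ⟨hβ, by linear_combination -hβ / 2⟩
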